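/- Let (G, M, I) be a polarity and R_◇ ⊆ M × G a relation such that R_◇^{(0)}[{g}] is Galois-stable for every g ∈ G. Then for every formal concept c of (G, M, I), the pair ⟨R_◇⟩c := ((R_◇^{(0)}[⟦c⟧])^↓, R_◇^{(0)}[⟦c⟧]) is a formal concept, and the map c ↦ ⟨R_◇⟩c is monotone (order-preserving) on the concept lattice. -/

import Mathlib

/-!
`R^{(0)}[B]` is the intersection of the sets `R^{(0)}[{g}]`, `g ∈ B`, and Galois-stable sets
(intents) are closed under intersections, so `R^{(0)}[⟦c⟧]` is the intent of a concept.
Monotonicity holds because `R^{(0)}` is antitone while concepts are ordered reversely by intents.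
-/

open Order

theorem lowerPolar_eq_biInter_singleton {α β : Type*} (r : α → β → Prop) (t : Set β) :
    lowerPolar r t = ⋂ b ∈ t, lowerPolar r {b} := by
  conv_lhs => rw [← Set.biUnion_of_singleton t]
  exact lowerPolar_iUnion₂ ..

theorem isIntent_lowerPolar_of_forall_singleton {G M : Type*} {I : G → M → Prop}
    {R : M → G → Prop} (h : ∀ g, IsIntent I (lowerPolar R {g})) (s : Set G) :
    IsIntent I (lowerPolar R s) := by
  rw [lowerPolar_eq_biInter_singleton]
  exact IsIntent.iInter₂ _ fun g _ => h g

/-- Let `(G, M, I)` be a polarity and `R ⊆ M × G` a relation such that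
`R^{(0)}[{g}]` is Galois-stable for every `g ∈ G`. Then for every formal concept `c`,
`⟨R⟩c := ((R^{(0)}[⟦c⟧])^↓, R^{(0)}[⟦c⟧])` is a formal concept, and `c ↦ ⟨R⟩c` is
monotone on the concept lattice. -/
theorem diamond_operator_well_defined_and_monotone {G M : Type*} (I : G → M → Prop)
    (R : M → G → Prop)
    (hcomp : ∀ g : G,
      upperPolar I (lowerPolar I (lowerPolar R {g})) = lowerPolar R {g}) :
    (∀ c : Concept G M I, ∃ d : Concept G M I,
        d.intent = lowerPolar R c.extent ∧ d.extent = lowerPolar I (lowerPolar R c.extent)) ∧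
    (∀ c₁ c₂ d₁ d₂ : Concept G M I, d₁.intent = lowerPolar R c₁.extent →
        d₂.intent = lowerPolar R c₂.extent → c₁ ≤ c₂ → d₁ ≤ d₂) := by
  have hstable : ∀ c : Concept G M I, IsIntent I (lowerPolar R c.extent) := fun c =>
    isIntent_lowerPolar_of_forall_singleton (fun g => isIntent_iff.2 (hcomp g)) c.extent
  refine ⟨fun c => ⟨Concept.ofIsIntent I _ (hstable c), rfl, rfl⟩, ?_⟩
  intro c₁ c₂ d₁ d₂ h₁ h₂ hle
  rw [← Concept.intent_subset_intent_iff, h₁, h₂]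
  exact lowerPolar_anti R (Concept.extent_subset_extent_iff.2 hle)
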